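/- arXiv:2306.12646 — 4 statements merged into one kernel-verified Lean document; each statement's English description precedes it below -/
import Mathlib

section
/- Restricted-integral rescaling identity used in the proof of Theorem 3.3: Let 1 ≤ t ≤ k ≤ T, let B ⊆ Z be a measurable set such that D_j(B) = 0 and O_j(B) = 0 for every index j with j < t or j > k, and let g : Z → [0,∞] be measurable. Then ∫_B g dD_{[1:k]}^{α} = (π_{[t:T]}/π_{[1:k]}) · ∫_B g dD_t^{α′_t}. -/
open MeasureTheory Finset

/-! On `B` only the components with `t ≤ i ≤ k` carry mass, so both restricted mixtures are
scalar multiples of the same measure `(∑_{i=t}^{k} π_i ((1-α_i) D_i + α_i O_i)).restrict B`. -/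

theorem MeasureTheory.Measure.restrict_finset_sum {Z ι : Type*} [MeasurableSpace Z]
    (s : Finset ι) (μ : ι → Measure Z) (B : Set Z) :
    (∑ i ∈ s, μ i).restrict B = ∑ i ∈ s, (μ i).restrict B :=
  _root_.map_sum (Measure.restrictₗ B) μ s

theorem MeasureTheory.Measure.restrict_finset_sum_of_subset {Z ι : Type*} [MeasurableSpace Z]
    {s s' : Finset ι} (h : s' ⊆ s) {μ : ι → Measure Z} {B : Set Z}
    (hnull : ∀ i ∈ s, i ∉ s' → μ i B = 0) :
    (∑ i ∈ s, μ i).restrict B = (∑ i ∈ s', μ i).restrict B := by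
  rw [Measure.restrict_finset_sum, Measure.restrict_finset_sum]
  exact (sum_subset h fun i hi hi' => Measure.restrict_eq_zero.2 (hnull i hi hi')).symm

theorem ENNReal.div_mul_inv_mul_cancel {s c : ENNReal} (hs0 : s ≠ 0) (hs : s ≠ ⊤) (x : ENNReal) :
    s / c * (s⁻¹ * x) = c⁻¹ * x := by
  rw [ENNReal.div_eq_inv_mul, mul_assoc, ← mul_assoc s, ENNReal.mul_inv_cancel hs0 hs, one_mul]

theorem restricted_integral_rescaling_thm33_general
    {Z : Type*} [MeasurableSpace Z]
    (T : ℕ)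
    (D O : ℕ → Measure Z)
    (π : ℕ → ENNReal) (hπpos : ∀ i ∈ Icc 1 T, 0 < π i)
    (hπsum : ∑ i ∈ Icc 1 T, π i = 1)
    (α : ℕ → ENNReal)
    (t k : ℕ) (ht : 1 ≤ t) (htk : t ≤ k) (hkT : k ≤ T)
    (B : Set Z)
    (hnull : ∀ j ∈ Icc 1 T, (j < t ∨ k < j) → D j B = 0 ∧ O j B = 0)
    (g : Z → ENNReal) :
    (∫⁻ z in B, g z
        ∂((∑ i ∈ Icc 1 k, π i)⁻¹ •
          ∑ i ∈ Icc 1 k, π i • ((1 - α i) • D i + α i • O i)))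
      = ((∑ i ∈ Icc t T, π i) / ∑ i ∈ Icc 1 k, π i) *
        ∫⁻ z in B, g z
          ∂((∑ i ∈ Icc t T, π i)⁻¹ •
            ∑ i ∈ Icc t T, π i • ((1 - α i) • D i + α i • O i)) := by
  set μ : ℕ → Measure Z := fun i => π i • ((1 - α i) • D i + α i • O i)
  have hμnull : ∀ j ∈ Icc 1 T, (j < t ∨ k < j) → μ j B = 0 := fun j hj hjr => by
    simp [μ, (hnull j hj hjr).1, (hnull j hj hjr).2]
  have hleft : (∑ i ∈ Icc 1 k, μ i).restrict B = (∑ i ∈ Icc t k, μ i).restrict B :=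
    Measure.restrict_finset_sum_of_subset (Icc_subset_Icc ht le_rfl) fun j hj hj' => by
      simp only [mem_Icc] at hj hj'
      exact hμnull j (mem_Icc.2 ⟨hj.1, hj.2.trans hkT⟩) (Or.inl (by omega))
  have hright : (∑ i ∈ Icc t T, μ i).restrict B = (∑ i ∈ Icc t k, μ i).restrict B :=
    Measure.restrict_finset_sum_of_subset (Icc_subset_Icc le_rfl hkT) fun j hj hj' => by
      simp only [mem_Icc] at hj hj'
      exact hμnull j (mem_Icc.2 ⟨ht.trans hj.1, hj.2⟩) (Or.inr (by omega))
  have ht_mem : t ∈ Icc t T := mem_Icc.2 ⟨le_rfl, htk.trans hkT⟩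
  have hs0 : ∑ i ∈ Icc t T, π i ≠ 0 := fun h =>
    (hπpos t (Icc_subset_Icc ht le_rfl ht_mem)).ne' (sum_eq_zero_iff.1 h t ht_mem)
  have hs_top : ∑ i ∈ Icc t T, π i ≠ ⊤ :=
    ne_top_of_le_ne_top ENNReal.one_ne_top (hπsum ▸ sum_le_sum_of_subset (Icc_subset_Icc ht le_rfl))
  rw [Measure.restrict_smul, Measure.restrict_smul, hleft, hright, lintegral_smul_measure,
    lintegral_smul_measure, smul_eq_mul, smul_eq_mul, ENNReal.div_mul_inv_mul_cancel hs0 hs_top]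

/-- Restricted-integral rescaling identity used in the proof of Theorem 3.3:
if `B` is a measurable set null for `D_j` and `O_j` whenever `j < t` or `j > k`, then
`∫_B g dD_{[1:k]}^{α} = (π_{[t:T]}/π_{[1:k]}) · ∫_B g dD_t^{α′_t}`. -/
theorem restricted_integral_rescaling_thm33
    {Z : Type*} [MeasurableSpace Z]
    (T : ℕ) (hT : 1 ≤ T)
    (D O : ℕ → Measure Z)
    (hD : ∀ i ∈ Icc 1 T, IsProbabilityMeasure (D i))
    (hO : ∀ i ∈ Icc 1 T, IsProbabilityMeasure (O i))
    (π : ℕ → ENNReal) (hπpos : ∀ i ∈ Icc 1 T, 0 < π i)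
    (hπsum : ∑ i ∈ Icc 1 T, π i = 1)
    (α : ℕ → ENNReal) (hα : ∀ i ∈ Icc 1 T, α i < 1)
    (t k : ℕ) (ht : 1 ≤ t) (htk : t ≤ k) (hkT : k ≤ T)
    (B : Set Z) (hB : MeasurableSet B)
    (hnull : ∀ j ∈ Icc 1 T, (j < t ∨ k < j) → D j B = 0 ∧ O j B = 0)
    (g : Z → ENNReal) (hg : Measurable g) :
    (∫⁻ z in B, g z
        ∂((∑ i ∈ Icc 1 k, π i)⁻¹ •
          ∑ i ∈ Icc 1 k, π i • ((1 - α i) • D i + α i • O i)))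
      = ((∑ i ∈ Icc t T, π i) / ∑ i ∈ Icc 1 k, π i) *
        ∫⁻ z in B, g z
          ∂((∑ i ∈ Icc t T, π i)⁻¹ •
            ∑ i ∈ Icc t T, π i • ((1 - α i) • D i + α i • O i)) :=
  restricted_integral_rescaling_thm33_general T D O π hπpos hπsum α t k ht htk hkT B hnull g
end

section
/- Risk decomposition inequality (core of Theorem 3.3): Fix 1 ≤ k ≤ T. Let g_1^o, …, g_T^o, g_1^c, …, g_T^c and f̃ be measurable functions Z → [0,∞] such that for every 1 ≤ i ≤ k: f̃(z) ≤ Σ_{t=1}^{i−1} g_t^o(z) + g_i^c(z) for all z ∈ A_i, and f̃(z) ≤ Σ_{t=1}^{i} g_t^o(z) for all z ∈ B_i. For 1 ≤ t ≤ k define F_t : Z → [0,∞] by F_t(z) = g_t^c(z) if z ∈ A_t; F_t(z) = g_t^o(z) if z ∈ A_i for some i with t < i ≤ k, or z ∈ B_i for some i with t ≤ i ≤ k; and F_t(z) = 0 otherwise. Then ∫ f̃ dD_{[1:k]}^{α} ≤ Σ_{t=1}^{k} (π_{[t:T]}/π_{[1:k]}) · ∫ F_t dD_t^{α′_t}. 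-/
/-!
Each mixture component of `D_{[1:k]}^α` lives on a single set `A_i` or `B_i`, where the hypotheses
dominate `f̃` by a sum over tasks `t ≤ i` of losses that are bounded there by `F_t`. Integrating
gives `∫ f̃ dD_i ≤ ∑_{t ≤ i} ∫ F_t dD_i` and likewise for `O_i`; exchanging the sums over
`1 ≤ t ≤ i ≤ k` and enlarging `i ≤ k` to `i ≤ T` turns the weighted sum over `i` into
`∑_t π_{[t:T]} ∫ F_t dD_t^{α′_t}`.
-/

open MeasureTheory Finset
open scoped ENNReal

theorem Finset.sum_Icc_sum_Icc_le_sum_Icc_sum_Icc {M : Type*} [AddCommMonoid M] [Preorder M]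
    [CanonicallyOrderedAdd M] {k T : ℕ} (hkT : k ≤ T) (a : ℕ → ℕ → M) :
    ∑ i ∈ Icc 1 k, ∑ t ∈ Icc 1 i, a i t ≤ ∑ t ∈ Icc 1 k, ∑ i ∈ Icc t T, a i t := by
  rw [sum_comm' (t' := Icc 1 k) (s' := fun t => Icc t k) (by intro i t; simp only [mem_Icc]; omega)]
  exact sum_le_sum fun t _ => sum_le_sum_of_subset (Icc_subset_Icc le_rfl hkT)

namespace MeasureTheory

variable {Z : Type*} [MeasurableSpace Z]

theorem lintegral_sum_smul_mixture (s : Finset ℕ) (π α : ℕ → ℝ≥0∞) (D O : ℕ → Measure Z)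
    (f : Z → ℝ≥0∞) :
    ∫⁻ z, f z ∂(∑ i ∈ s, π i • ((1 - α i) • D i + α i • O i))
      = ∑ i ∈ s, π i * ((1 - α i) * ∫⁻ z, f z ∂D i + α i * ∫⁻ z, f z ∂O i) := by
  simp only [lintegral_finsetSum_measure, lintegral_smul_measure, lintegral_add_measure,
    smul_eq_mul]

theorem div_mul_lintegral_inv_smul_measure (μ : Measure Z) (f : Z → ℝ≥0∞) {s : ℝ≥0∞}
    (c : ℝ≥0∞) (hs₀ : s ≠ 0) (hs : s ≠ ∞) :
    s / c * ∫⁻ z, f z ∂(s⁻¹ • μ) = c⁻¹ * ∫⁻ z, f z ∂μ := by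
  rw [lintegral_smul_measure, smul_eq_mul, div_eq_mul_inv, mul_mul_mul_comm,
    ENNReal.mul_inv_cancel hs₀ hs, one_mul]

end MeasureTheory

section TaskLoss

variable {Z : Type*} (A B : ℕ → Set Z) (go gc : ℕ → Z → ℝ≥0∞) (k : ℕ)

/-- The loss `F_t` charged to task `t` among the first `k` tasks. -/
noncomputable def taskLoss (t : ℕ) (z : Z) : ℝ≥0∞ :=
  (A t).indicator (gc t) z + (⋃ i ∈ Set.Ioc t k, A i).indicator (go t) z +
    (⋃ i ∈ Set.Icc t k, B i).indicator (go t) z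

variable {A B go gc k}

theorem gc_le_taskLoss {t : ℕ} {z : Z} (hz : z ∈ A t) : gc t z ≤ taskLoss A B go gc k t z := by
  rw [taskLoss, Set.indicator_of_mem hz, add_assoc]
  exact le_self_add

theorem go_le_taskLoss_of_mem_A {t i : ℕ} {z : Z} (hti : t < i) (hik : i ≤ k) (hz : z ∈ A i) :
    go t z ≤ taskLoss A B go gc k t z := by
  rw [taskLoss, Set.indicator_of_mem (Set.mem_biUnion (Set.mem_Ioc.2 ⟨hti, hik⟩) hz)]
  exact le_self_add.trans' le_add_self

theorem go_le_taskLoss_of_mem_B {t i : ℕ} {z : Z} (hti : t ≤ i) (hik : i ≤ k) (hz : z ∈ B i) :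
    go t z ≤ taskLoss A B go gc k t z := by
  rw [taskLoss, Set.indicator_of_mem (Set.mem_biUnion (Set.mem_Icc.2 ⟨hti, hik⟩) hz)]
  exact le_add_self

variable [MeasurableSpace Z] {μ : Measure Z} {f : Z → ℝ≥0∞} {i : ℕ}

theorem lintegral_le_sum_lintegral_taskLoss_of_ae_mem_A (hgo : ∀ t, Measurable (go t))
    (hi : i ∈ Icc 1 k) (hμ : ∀ᵐ z ∂μ, z ∈ A i)
    (hf : ∀ z ∈ A i, f z ≤ ∑ t ∈ Icc 1 (i - 1), go t z + gc i z) :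
    ∫⁻ z, f z ∂μ ≤ ∑ t ∈ Icc 1 i, ∫⁻ z, taskLoss A B go gc k t z ∂μ := by
  obtain ⟨hi1, hik⟩ := mem_Icc.1 hi
  obtain ⟨j, rfl⟩ : ∃ j, i = j + 1 := ⟨i - 1, by omega⟩
  rw [Nat.add_sub_cancel] at hf
  calc ∫⁻ z, f z ∂μ ≤ ∫⁻ z, (∑ t ∈ Icc 1 j, go t z + gc (j + 1) z) ∂μ :=
        lintegral_mono_ae (hμ.mono hf)
    _ = ∑ t ∈ Icc 1 j, ∫⁻ z, go t z ∂μ + ∫⁻ z, gc (j + 1) z ∂μ := by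
        rw [lintegral_add_left (measurable_sum _ fun t _ => hgo t),
          lintegral_finsetSum _ fun t _ => hgo t]
    _ ≤ ∑ t ∈ Icc 1 j, ∫⁻ z, taskLoss A B go gc k t z ∂μ
          + ∫⁻ z, taskLoss A B go gc k (j + 1) z ∂μ := by
        refine add_le_add (sum_le_sum fun t ht => lintegral_mono_ae (hμ.mono fun z hz => ?_))
          (lintegral_mono_ae (hμ.mono fun z hz => gc_le_taskLoss hz))
        exact go_le_taskLoss_of_mem_A (Nat.lt_succ_of_le (mem_Icc.1 ht).2) hik hz
    _ = ∑ t ∈ Icc 1 (j + 1), ∫⁻ z, taskLoss A B go gc k t z ∂μ :=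
        (sum_Icc_succ_top hi1 _).symm

theorem lintegral_le_sum_lintegral_taskLoss_of_ae_mem_B (hgo : ∀ t, Measurable (go t))
    (hi : i ∈ Icc 1 k) (hμ : ∀ᵐ z ∂μ, z ∈ B i)
    (hf : ∀ z ∈ B i, f z ≤ ∑ t ∈ Icc 1 i, go t z) :
    ∫⁻ z, f z ∂μ ≤ ∑ t ∈ Icc 1 i, ∫⁻ z, taskLoss A B go gc k t z ∂μ := by
  calc ∫⁻ z, f z ∂μ ≤ ∫⁻ z, ∑ t ∈ Icc 1 i, go t z ∂μ := lintegral_mono_ae (hμ.mono hf)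
    _ = ∑ t ∈ Icc 1 i, ∫⁻ z, go t z ∂μ := lintegral_finsetSum _ fun t _ => hgo t
    _ ≤ ∑ t ∈ Icc 1 i, ∫⁻ z, taskLoss A B go gc k t z ∂μ :=
        sum_le_sum fun t ht => lintegral_mono_ae (hμ.mono fun z hz =>
          go_le_taskLoss_of_mem_B (mem_Icc.1 ht).2 (mem_Icc.1 hi).2 hz)

end TaskLoss

theorem risk_decomposition_thm33_general
    {Z : Type*} [MeasurableSpace Z]
    (T : ℕ)
    (D O : ℕ → Measure Z)
    (hD : ∀ i ∈ Icc 1 T, IsProbabilityMeasure (D i))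
    (hO : ∀ i ∈ Icc 1 T, IsProbabilityMeasure (O i))
    (π : ℕ → ENNReal) (hπpos : ∀ i ∈ Icc 1 T, 0 < π i)
    (hπsum : ∑ i ∈ Icc 1 T, π i = 1)
    (α : ℕ → ENNReal)
    (A B : ℕ → Set Z)
    (hAmeas : ∀ i ∈ Icc 1 T, MeasurableSet (A i))
    (hBmeas : ∀ i ∈ Icc 1 T, MeasurableSet (B i))
    (hDsupp : ∀ i ∈ Icc 1 T, D i (A i) = 1)
    (hOsupp : ∀ i ∈ Icc 1 T, O i (B i) = 1)
    (k : ℕ) (hk : k ∈ Icc 1 T)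
    (go gc : ℕ → Z → ENNReal) (ftilde : Z → ENNReal)
    (hgo : ∀ t, Measurable (go t))
    (hboundA : ∀ i ∈ Icc 1 k, ∀ z ∈ A i,
      ftilde z ≤ ∑ t ∈ Icc 1 (i - 1), go t z + gc i z)
    (hboundB : ∀ i ∈ Icc 1 k, ∀ z ∈ B i,
      ftilde z ≤ ∑ t ∈ Icc 1 i, go t z) :
    (∫⁻ z, ftilde z
        ∂((∑ i ∈ Icc 1 k, π i)⁻¹ •
          ∑ i ∈ Icc 1 k, π i • ((1 - α i) • D i + α i • O i)))
      ≤ ∑ t ∈ Icc 1 k,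
          ((∑ i ∈ Icc t T, π i) / ∑ i ∈ Icc 1 k, π i) *
          ∫⁻ z,
            ((A t).indicator (gc t) z +
              (⋃ i ∈ Set.Ioc t k, A i).indicator (go t) z +
              (⋃ i ∈ Set.Icc t k, B i).indicator (go t) z)
            ∂((∑ i ∈ Icc t T, π i)⁻¹ •
              ∑ i ∈ Icc t T, π i • ((1 - α i) • D i + α i • O i)) := by
  have hkT := (mem_Icc.1 hk).2
  have hmem {i : ℕ} (hi : i ∈ Icc 1 k) : i ∈ Icc 1 T := Icc_subset_Icc le_rfl hkT hi
  have hDae (i) (hi : i ∈ Icc 1 k) : ∀ᵐ z ∂D i, z ∈ A i :=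
    have := hD i (hmem hi); (mem_ae_iff_prob_eq_one (hAmeas i (hmem hi))).2 (hDsupp i (hmem hi))
  have hOae (i) (hi : i ∈ Icc 1 k) : ∀ᵐ z ∂O i, z ∈ B i :=
    have := hO i (hmem hi); (mem_ae_iff_prob_eq_one (hBmeas i (hmem hi))).2 (hOsupp i (hmem hi))
  have htail_ne_zero (t) (ht : t ∈ Icc 1 k) : ∑ i ∈ Icc t T, π i ≠ 0 := fun h =>
    (hπpos t (hmem ht)).ne' (sum_eq_zero_iff.1 h t (left_mem_Icc.2 (mem_Icc.1 (hmem ht)).2))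
  have htail_ne_top (t) (ht : t ∈ Icc 1 k) : ∑ i ∈ Icc t T, π i ≠ ∞ :=
    ne_top_of_le_ne_top (hπsum ▸ ENNReal.one_ne_top)
      (sum_le_sum_of_subset (Icc_subset_Icc (mem_Icc.1 ht).1 le_rfl))
  rw [lintegral_smul_measure, smul_eq_mul, lintegral_sum_smul_mixture,
    sum_congr rfl fun t ht => div_mul_lintegral_inv_smul_measure _ _ _
      (htail_ne_zero t ht) (htail_ne_top t ht), ← mul_sum]
  refine mul_le_mul_right ?_ _
  calc _ ≤ ∑ i ∈ Icc 1 k, ∑ t ∈ Icc 1 i, π i * ((1 - α i) * ∫⁻ z, taskLoss A B go gc k t z ∂D i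
            + α i * ∫⁻ z, taskLoss A B go gc k t z ∂O i) := by
        gcongr with i hi
        rw [← mul_sum, sum_add_distrib, ← mul_sum, ← mul_sum]
        gcongr
        · exact lintegral_le_sum_lintegral_taskLoss_of_ae_mem_A hgo hi (hDae i hi) (hboundA i hi)
        · exact lintegral_le_sum_lintegral_taskLoss_of_ae_mem_B hgo hi (hOae i hi) (hboundB i hi)
    _ ≤ _ := sum_Icc_sum_Icc_le_sum_Icc_sum_Icc hkT _
    _ = _ := sum_congr rfl fun t _ => (lintegral_sum_smul_mixture _ _ _ _ _ _).symm

/-- Risk decomposition inequality (core of Theorem 3.3): under the domination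
hypotheses on `f̃` on the supports `A_i`, `B_i`, with
`F_t = g_t^c` on `A_t`, `F_t = g_t^o` on `A_i (t < i ≤ k)` and `B_i (t ≤ i ≤ k)`,
and `F_t = 0` elsewhere (written via indicators of the pairwise disjoint sets),
`∫ f̃ dD_{[1:k]}^{α} ≤ ∑_{t=1}^{k} (π_{[t:T]}/π_{[1:k]}) ∫ F_t dD_t^{α′_t}`. -/
theorem risk_decomposition_thm33
    {Z : Type*} [MeasurableSpace Z]
    (T : ℕ) (hT : 1 ≤ T)
    (D O : ℕ → Measure Z)
    (hD : ∀ i ∈ Icc 1 T, IsProbabilityMeasure (D i))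
    (hO : ∀ i ∈ Icc 1 T, IsProbabilityMeasure (O i))
    (π : ℕ → ENNReal) (hπpos : ∀ i ∈ Icc 1 T, 0 < π i)
    (hπsum : ∑ i ∈ Icc 1 T, π i = 1)
    (α : ℕ → ENNReal) (hα : ∀ i ∈ Icc 1 T, α i < 1)
    (A B : ℕ → Set Z)
    (hAmeas : ∀ i ∈ Icc 1 T, MeasurableSet (A i))
    (hBmeas : ∀ i ∈ Icc 1 T, MeasurableSet (B i))
    (hdisj : ∀ i ∈ Icc 1 T, ∀ j ∈ Icc 1 T,
      (i ≠ j → Disjoint (A i) (A j)) ∧ (i ≠ j → Disjoint (B i) (B j)) ∧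
        Disjoint (A i) (B j))
    (hDsupp : ∀ i ∈ Icc 1 T, D i (A i) = 1)
    (hOsupp : ∀ i ∈ Icc 1 T, O i (B i) = 1)
    (k : ℕ) (hk : k ∈ Icc 1 T)
    (go gc : ℕ → Z → ENNReal) (ftilde : Z → ENNReal)
    (hgo : ∀ t, Measurable (go t)) (hgc : ∀ t, Measurable (gc t))
    (hftilde : Measurable ftilde)
    (hboundA : ∀ i ∈ Icc 1 k, ∀ z ∈ A i,
      ftilde z ≤ ∑ t ∈ Icc 1 (i - 1), go t z + gc i z)
    (hboundB : ∀ i ∈ Icc 1 k, ∀ z ∈ B i,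
      ftilde z ≤ ∑ t ∈ Icc 1 i, go t z) :
    (∫⁻ z, ftilde z
        ∂((∑ i ∈ Icc 1 k, π i)⁻¹ •
          ∑ i ∈ Icc 1 k, π i • ((1 - α i) • D i + α i • O i)))
      ≤ ∑ t ∈ Icc 1 k,
          ((∑ i ∈ Icc t T, π i) / ∑ i ∈ Icc 1 k, π i) *
          ∫⁻ z,
            ((A t).indicator (gc t) z +
              (⋃ i ∈ Set.Ioc t k, A i).indicator (go t) z +
              (⋃ i ∈ Set.Icc t k, B i).indicator (go t) z)
            ∂((∑ i ∈ Icc t T, π i)⁻¹ •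
              ∑ i ∈ Icc t T, π i • ((1 - α i) • D i + α i • O i)) :=
  risk_decomposition_thm33_general T D O hD hO π hπpos hπsum α A B hAmeas hBmeas hDsupp hOsupp k hk
    go gc ftilde hgo hboundA hboundB
end

section
/- Theorem 3.3 (partially-observable open-world bounds imply fully-observable open-world bounds, quantitative form): Fix 1 ≤ k ≤ T and ε > 0. Let g_1^o, …, g_T^o, g_1^c, …, g_T^c and f̃ be measurable functions Z → [0,∞] such that for every 1 ≤ i ≤ k: f̃(z) ≤ Σ_{t=1}^{i−1} g_t^o(z) + g_i^c(z) for all z ∈ A_i, and f̃(z) ≤ Σ_{t=1}^{i} g_t^o(z) for all z ∈ B_i. For 1 ≤ t ≤ k define F_t : Z → [0,∞] by F_t(z) = g_t^c(z) if z ∈ A_t; F_t(z) = g_t^o(z) if z ∈ A_i for some t < i ≤ k or z ∈ B_i for some t ≤ i ≤ k; and F_t(z) = 0 otherwise. If ∫ F_t dD_t^{α′_t} < ε for every 1 ≤ t ≤ k, then ∫ f̃ dD_{[1:k]}^{α} < ε · Σ_{t=1}^{k} π_{[t:T]}/π_{[1:k]}; in particular ∫ f̃ dD_{[1:k]}^{α}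 < ε · max_{1 ≤ k′ ≤ T} Σ_{t=1}^{k′} π_{[t:T]}/π_{[1:k′]}. -/
/-!
On `A_i` the assumed bound `g₁ᵒ + ⋯ + g_{i-1}ᵒ + g_iᶜ` on `f̃` is dominated by `F₁ + ⋯ + F_i`, and
so is `g₁ᵒ + ⋯ + g_iᵒ` on `B_i`; hence `f̃ ≤ F₁ + ⋯ + F_i` almost everywhere for the `i`-th
mixture component `π_i ((1 - α_i) D_i + α_i O_i)`. Summing over `i ≤ k` and exchanging the order
of summation, the unnormalised integral of `f̃` is at most the sum over `t ≤ k` of the integrals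
of `F_t` against the components `t, …, T`, that is of `π_{[t:T]} ∫ F_t dD_t^{α′_t} < ε π_{[t:T]}`.
Dividing by `π_{[1:k]}` gives the first bound; the second bounds the factor by its supremum.
-/

open MeasureTheory Finset
open scoped ENNReal

section CombinedBound

variable {Z : Type*}

-- `F_t` of the paper: as the `A_i, B_i` are disjoint, this sum of indicators agrees with its
-- definition by cases.
noncomputable def combinedBound (A B : ℕ → Set Z) (go gc : ℕ → Z → ℝ≥0∞) (k t : ℕ) (z : Z) : ℝ≥0∞ :=
  (A t).indicator (gc t) z + (⋃ i ∈ Set.Ioc t k, A i).indicator (go t) z +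
    (⋃ i ∈ Set.Icc t k, B i).indicator (go t) z

variable {A B : ℕ → Set Z} {go gc : ℕ → Z → ℝ≥0∞} {k t i : ℕ} {z : Z}

theorem measurable_combinedBound [MeasurableSpace Z] (hA : ∀ i ∈ Icc 1 k, MeasurableSet (A i))
    (hB : ∀ i ∈ Icc 1 k, MeasurableSet (B i)) (hgo : Measurable (go t)) (hgc : Measurable (gc t))
    (ht : t ∈ Icc 1 k) : Measurable (combinedBound A B go gc k t) := by
  have hAt : MeasurableSet (⋃ i ∈ Set.Ioc t k, A i) :=
    .biUnion (Set.to_countable _) fun i hi => hA i (by simp at hi ⊢; omega)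
  have hBt : MeasurableSet (⋃ i ∈ Set.Icc t k, B i) :=
    .biUnion (Set.to_countable _) fun i hi => hB i (by simp at ht hi ⊢; omega)
  exact ((hgc.indicator (hA t ht)).add (hgo.indicator hAt)).add (hgo.indicator hBt)

theorem gc_le_combinedBound (hz : z ∈ A t) : gc t z ≤ combinedBound A B go gc k t z := by
  rw [combinedBound, Set.indicator_of_mem hz, add_assoc]
  exact le_self_add

theorem go_le_combinedBound_of_mem_A (hti : t < i) (hik : i ≤ k) (hz : z ∈ A i) :
    go t z ≤ combinedBound A B go gc k t z := by
  have hz' : z ∈ ⋃ j ∈ Set.Ioc t k, A j := Set.mem_biUnion ⟨hti, hik⟩ hz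
  rw [combinedBound, Set.indicator_of_mem hz']
  exact le_add_right le_add_self

theorem go_le_combinedBound_of_mem_B (hti : t ≤ i) (hik : i ≤ k) (hz : z ∈ B i) :
    go t z ≤ combinedBound A B go gc k t z := by
  have hz' : z ∈ ⋃ j ∈ Set.Icc t k, B j := Set.mem_biUnion ⟨hti, hik⟩ hz
  rw [combinedBound, Set.indicator_of_mem hz']
  exact le_add_self

theorem le_sum_combinedBound_of_mem_A {f : Z → ℝ≥0∞} (hi : i ∈ Icc 1 k) (hz : z ∈ A i)
    (hf : f z ≤ ∑ t ∈ Icc 1 (i - 1), go t z + gc i z) :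
    f z ≤ ∑ t ∈ Icc 1 i, combinedBound A B go gc k t z := by
  obtain ⟨hi1, hik⟩ := mem_Icc.mp hi
  obtain ⟨j, rfl⟩ : ∃ j, i = j + 1 := ⟨i - 1, by omega⟩
  rw [sum_Icc_succ_top (by omega)]
  refine hf.trans (add_le_add (sum_le_sum fun _ ht => ?_) (gc_le_combinedBound hz))
  exact go_le_combinedBound_of_mem_A (by simp at ht; omega) hik hz

theorem le_sum_combinedBound_of_mem_B {f : Z → ℝ≥0∞} (hi : i ∈ Icc 1 k) (hz : z ∈ B i)
    (hf : f z ≤ ∑ t ∈ Icc 1 i, go t z) :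
    f z ≤ ∑ t ∈ Icc 1 i, combinedBound A B go gc k t z :=
  hf.trans <| sum_le_sum fun _ ht =>
    go_le_combinedBound_of_mem_B (mem_Icc.mp ht).2 (mem_Icc.mp hi).2 hz

end CombinedBound

theorem sum_ne_zero_and_ne_top_of_subset {ι : Type*} {w : ι → ℝ≥0∞} {s u : Finset ι}
    (hw : ∀ i ∈ s, 0 < w i) (hu : ∑ i ∈ u, w i ≠ ∞) (hsu : s ⊆ u) (hs : s.Nonempty) :
    ∑ i ∈ s, w i ≠ 0 ∧ ∑ i ∈ s, w i ≠ ∞ := by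
  obtain ⟨j, hj⟩ := hs
  exact ⟨((hw j hj).trans_le (single_le_sum (fun _ _ => zero_le) hj)).ne',
    ne_top_of_le_ne_top hu (sum_le_sum_of_subset hsu)⟩

section Mixture

variable {Z : Type*} [MeasurableSpace Z]

theorem ae_mem_union_smul_add_smul {μ ν : Measure Z} [IsProbabilityMeasure μ]
    [IsProbabilityMeasure ν] {s t : Set Z} (hs : MeasurableSet s) (ht : MeasurableSet t)
    (hμs : μ s = 1) (hνt : ν t = 1) (c a b : ℝ≥0∞) :
    ∀ᵐ z ∂c • (a • μ + b • ν), z ∈ s ∪ t := by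
  have hμ : ∀ᵐ z ∂μ, z ∈ s := (mem_ae_iff_prob_eq_one hs).mpr hμs
  have hν : ∀ᵐ z ∂ν, z ∈ t := (mem_ae_iff_prob_eq_one ht).mpr hνt
  refine Measure.ae_smul_measure (ae_add_measure_iff.mpr ⟨?_, ?_⟩) c
  · exact Measure.ae_smul_measure (hμ.mono fun z => Or.inl) a
  · exact Measure.ae_smul_measure (hν.mono fun z => Or.inr) b

theorem ae_le_sum_combinedBound {A B : ℕ → Set Z} {go gc : ℕ → Z → ℝ≥0∞} {f : Z → ℝ≥0∞}
    {k i : ℕ} {μ ν : Measure Z} [IsProbabilityMeasure μ] [IsProbabilityMeasure ν]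
    (hi : i ∈ Icc 1 k) (hA : MeasurableSet (A i)) (hB : MeasurableSet (B i))
    (hμ : μ (A i) = 1) (hν : ν (B i) = 1)
    (hfA : ∀ z ∈ A i, f z ≤ ∑ t ∈ Icc 1 (i - 1), go t z + gc i z)
    (hfB : ∀ z ∈ B i, f z ≤ ∑ t ∈ Icc 1 i, go t z) (c a b : ℝ≥0∞) :
    ∀ᵐ z ∂c • (a • μ + b • ν), f z ≤ ∑ t ∈ Icc 1 i, combinedBound A B go gc k t z := by
  filter_upwards [ae_mem_union_smul_add_smul hA hB hμ hν c a b] with z hz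
  rcases hz with hz | hz
  · exact le_sum_combinedBound_of_mem_A hi hz (hfA z hz)
  · exact le_sum_combinedBound_of_mem_B hi hz (hfB z hz)

theorem lintegral_sum_measure_le_of_ae_le_sum_Icc {k : ℕ} {μ : ℕ → Measure Z} {f : Z → ℝ≥0∞}
    {F : ℕ → Z → ℝ≥0∞} (hF : ∀ t ∈ Icc 1 k, Measurable (F t))
    (hf : ∀ i ∈ Icc 1 k, ∀ᵐ z ∂μ i, f z ≤ ∑ t ∈ Icc 1 i, F t z) :
    ∫⁻ z, f z ∂(∑ i ∈ Icc 1 k, μ i) ≤ ∑ t ∈ Icc 1 k, ∫⁻ z, F t z ∂(∑ i ∈ Icc t k, μ i) := by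
  calc ∫⁻ z, f z ∂(∑ i ∈ Icc 1 k, μ i)
      ≤ ∑ i ∈ Icc 1 k, ∫⁻ z, ∑ t ∈ Icc 1 i, F t z ∂μ i := by
        rw [lintegral_finsetSum_measure]
        exact sum_le_sum fun i hi => lintegral_mono_ae (hf i hi)
    _ = ∑ i ∈ Icc 1 k, ∑ t ∈ Icc 1 i, ∫⁻ z, F t z ∂μ i := by
        refine sum_congr rfl fun i hi => lintegral_finsetSum' _ fun t ht => ?_
        exact (hF t (by simp at hi ht ⊢; omega)).aemeasurable
    _ = ∑ t ∈ Icc 1 k, ∑ i ∈ Icc t k, ∫⁻ z, F t z ∂μ i :=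
        sum_comm' fun i t => by simp only [mem_Icc]; omega
    _ = ∑ t ∈ Icc 1 k, ∫⁻ z, F t z ∂(∑ i ∈ Icc t k, μ i) := by
        simp only [lintegral_finsetSum_measure]

theorem lintegral_finsetSum_measure_mono {μ : ℕ → Measure Z} {s u : Finset ℕ} (h : s ⊆ u)
    (f : Z → ℝ≥0∞) : ∫⁻ z, f z ∂(∑ i ∈ s, μ i) ≤ ∫⁻ z, f z ∂(∑ i ∈ u, μ i) := by
  simp only [lintegral_finsetSum_measure]
  exact sum_le_sum_of_subset h

theorem lintegral_inv_smul_lt_iff {μ : Measure Z} {f : Z → ℝ≥0∞} {c ε : ℝ≥0∞} (hc0 : c ≠ 0)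
    (hc : c ≠ ∞) : ∫⁻ z, f z ∂(c⁻¹ • μ) < ε ↔ ∫⁻ z, f z ∂μ < ε * c := by
  rw [lintegral_smul_measure, smul_eq_mul, mul_comm, ← div_eq_mul_inv,
    ENNReal.div_lt_iff (.inl hc0) (.inl hc)]

end Mixture

theorem partially_observable_implies_fully_observable_thm33_general
    {Z : Type*} [MeasurableSpace Z]
    (T : ℕ)
    (D O : ℕ → Measure Z)
    (hD : ∀ i ∈ Icc 1 T, IsProbabilityMeasure (D i))
    (hO : ∀ i ∈ Icc 1 T, IsProbabilityMeasure (O i))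
    (π : ℕ → ENNReal) (hπpos : ∀ i ∈ Icc 1 T, 0 < π i)
    (hπsum : ∑ i ∈ Icc 1 T, π i = 1)
    (α : ℕ → ENNReal)
    (A B : ℕ → Set Z)
    (hAmeas : ∀ i ∈ Icc 1 T, MeasurableSet (A i))
    (hBmeas : ∀ i ∈ Icc 1 T, MeasurableSet (B i))
    (hDsupp : ∀ i ∈ Icc 1 T, D i (A i) = 1)
    (hOsupp : ∀ i ∈ Icc 1 T, O i (B i) = 1)
    (k : ℕ) (hk : k ∈ Icc 1 T)
    (ε : ENNReal)
    (go gc : ℕ → Z → ENNReal) (ftilde : Z → ENNReal)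
    (hgo : ∀ t, Measurable (go t)) (hgc : ∀ t, Measurable (gc t))
    (hboundA : ∀ i ∈ Icc 1 k, ∀ z ∈ A i,
      ftilde z ≤ ∑ t ∈ Icc 1 (i - 1), go t z + gc i z)
    (hboundB : ∀ i ∈ Icc 1 k, ∀ z ∈ B i,
      ftilde z ≤ ∑ t ∈ Icc 1 i, go t z)
    (hsmall : ∀ t ∈ Icc 1 k,
      (∫⁻ z,
          ((A t).indicator (gc t) z +
            (⋃ i ∈ Set.Ioc t k, A i).indicator (go t) z +
            (⋃ i ∈ Set.Icc t k, B i).indicator (go t) z)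
          ∂((∑ i ∈ Icc t T, π i)⁻¹ •
            ∑ i ∈ Icc t T, π i • ((1 - α i) • D i + α i • O i))) < ε) :
    (∫⁻ z, ftilde z
        ∂((∑ i ∈ Icc 1 k, π i)⁻¹ •
          ∑ i ∈ Icc 1 k, π i • ((1 - α i) • D i + α i • O i)))
      < ε * ∑ t ∈ Icc 1 k, (∑ i ∈ Icc t T, π i) / ∑ i ∈ Icc 1 k, π i ∧
    (∫⁻ z, ftilde z
        ∂((∑ i ∈ Icc 1 k, π i)⁻¹ •
          ∑ i ∈ Icc 1 k, π i • ((1 - α i) • D i + α i • O i)))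
      < ε * ⨆ k' ∈ Icc 1 T,
          ∑ t ∈ Icc 1 k', (∑ i ∈ Icc t T, π i) / ∑ i ∈ Icc 1 k', π i := by
  obtain ⟨hk1, hkT⟩ := mem_Icc.mp hk
  have hIcc : ∀ t ∈ Icc 1 k, t ∈ Icc 1 T := fun t ht => Icc_subset_Icc le_rfl hkT ht
  have hweight : ∀ s ⊆ Icc 1 T, s.Nonempty → ∑ i ∈ s, π i ≠ 0 ∧ ∑ i ∈ s, π i ≠ ∞ :=
    fun s hs => sum_ne_zero_and_ne_top_of_subset (fun i hi => hπpos i (hs hi))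
      (hπsum ▸ ENNReal.one_ne_top) hs
  have hae : ∀ i ∈ Icc 1 k, ∀ᵐ z ∂(π i • ((1 - α i) • D i + α i • O i)),
      ftilde z ≤ ∑ t ∈ Icc 1 i, combinedBound A B go gc k t z := fun i hi =>
    have := hD i (hIcc i hi)
    have := hO i (hIcc i hi)
    ae_le_sum_combinedBound hi (hAmeas i (hIcc i hi)) (hBmeas i (hIcc i hi))
      (hDsupp i (hIcc i hi)) (hOsupp i (hIcc i hi)) (hboundA i hi) (hboundB i hi) _ _ _
  have hF : ∀ t ∈ Icc 1 k, ∫⁻ z, combinedBound A B go gc k t z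
      ∂(∑ i ∈ Icc t k, π i • ((1 - α i) • D i + α i • O i)) < ε * ∑ i ∈ Icc t T, π i := by
    intro t ht
    obtain ⟨ht1, htk⟩ := mem_Icc.mp ht
    obtain ⟨h0, htop⟩ := hweight (Icc t T) (Icc_subset_Icc ht1 le_rfl) ⟨t, by simp; omega⟩
    have hsmall_t := hsmall t ht
    rw [lintegral_inv_smul_lt_iff h0 htop] at hsmall_t
    exact (lintegral_finsetSum_measure_mono (Icc_subset_Icc_right hkT) _).trans_lt hsmall_t
  have hmain : ∫⁻ z, ftilde z ∂((∑ i ∈ Icc 1 k, π i)⁻¹ •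
      ∑ i ∈ Icc 1 k, π i • ((1 - α i) • D i + α i • O i))
        < ε * ∑ t ∈ Icc 1 k, (∑ i ∈ Icc t T, π i) / ∑ i ∈ Icc 1 k, π i := by
    obtain ⟨h0, htop⟩ := hweight (Icc 1 k) (Icc_subset_Icc le_rfl hkT) ⟨k, by simp; omega⟩
    simp only [lintegral_inv_smul_lt_iff h0 htop, div_eq_mul_inv]
    rw [← sum_mul, mul_assoc, mul_assoc, ENNReal.inv_mul_cancel h0 htop, mul_one, mul_sum]
    refine (lintegral_sum_measure_le_of_ae_le_sum_Icc (fun t ht => ?_) hae).trans_lt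
      (ENNReal.sum_lt_sum_of_nonempty ⟨k, by simp; omega⟩ hF)
    exact measurable_combinedBound (fun i hi => hAmeas i (hIcc i hi))
      (fun i hi => hBmeas i (hIcc i hi)) (hgo t) (hgc t) ht
  exact ⟨hmain, hmain.trans_le (mul_le_mul_right (le_iSup₂ (f := fun k' (_ : k' ∈ Icc 1 T) =>
    ∑ t ∈ Icc 1 k', (∑ i ∈ Icc t T, π i) / ∑ i ∈ Icc 1 k', π i) k hk) ε)⟩

/-- Theorem 3.3 (partially-observable open-world bounds imply fully-observable
open-world bounds, quantitative form): if `∫ F_t dD_t^{α′_t} < ε` for every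
`1 ≤ t ≤ k`, then `∫ f̃ dD_{[1:k]}^{α} < ε · ∑_{t=1}^{k} π_{[t:T]}/π_{[1:k]}`,
and in particular `∫ f̃ dD_{[1:k]}^{α} < ε · max_{1 ≤ k′ ≤ T} ∑_{t=1}^{k′} π_{[t:T]}/π_{[1:k′]}`. -/
theorem partially_observable_implies_fully_observable_thm33
    {Z : Type*} [MeasurableSpace Z]
    (T : ℕ) (hT : 1 ≤ T)
    (D O : ℕ → Measure Z)
    (hD : ∀ i ∈ Icc 1 T, IsProbabilityMeasure (D i))
    (hO : ∀ i ∈ Icc 1 T, IsProbabilityMeasure (O i))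
    (π : ℕ → ENNReal) (hπpos : ∀ i ∈ Icc 1 T, 0 < π i)
    (hπsum : ∑ i ∈ Icc 1 T, π i = 1)
    (α : ℕ → ENNReal) (hα : ∀ i ∈ Icc 1 T, α i < 1)
    (A B : ℕ → Set Z)
    (hAmeas : ∀ i ∈ Icc 1 T, MeasurableSet (A i))
    (hBmeas : ∀ i ∈ Icc 1 T, MeasurableSet (B i))
    (hdisj : ∀ i ∈ Icc 1 T, ∀ j ∈ Icc 1 T,
      (i ≠ j → Disjoint (A i) (A j)) ∧ (i ≠ j → Disjoint (B i) (B j)) ∧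
        Disjoint (A i) (B j))
    (hDsupp : ∀ i ∈ Icc 1 T, D i (A i) = 1)
    (hOsupp : ∀ i ∈ Icc 1 T, O i (B i) = 1)
    (k : ℕ) (hk : k ∈ Icc 1 T)
    (ε : ENNReal) (hε : 0 < ε)
    (go gc : ℕ → Z → ENNReal) (ftilde : Z → ENNReal)
    (hgo : ∀ t, Measurable (go t)) (hgc : ∀ t, Measurable (gc t))
    (hftilde : Measurable ftilde)
    (hboundA : ∀ i ∈ Icc 1 k, ∀ z ∈ A i,
      ftilde z ≤ ∑ t ∈ Icc 1 (i - 1), go t z + gc i z)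
    (hboundB : ∀ i ∈ Icc 1 k, ∀ z ∈ B i,
      ftilde z ≤ ∑ t ∈ Icc 1 i, go t z)
    (hsmall : ∀ t ∈ Icc 1 k,
      (∫⁻ z,
          ((A t).indicator (gc t) z +
            (⋃ i ∈ Set.Ioc t k, A i).indicator (go t) z +
            (⋃ i ∈ Set.Icc t k, B i).indicator (go t) z)
          ∂((∑ i ∈ Icc t T, π i)⁻¹ •
            ∑ i ∈ Icc t T, π i • ((1 - α i) • D i + α i • O i))) < ε) :
    (∫⁻ z, ftilde z
        ∂((∑ i ∈ Icc 1 k, π i)⁻¹ •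
          ∑ i ∈ Icc 1 k, π i • ((1 - α i) • D i + α i • O i)))
      < ε * ∑ t ∈ Icc 1 k, (∑ i ∈ Icc t T, π i) / ∑ i ∈ Icc 1 k, π i ∧
    (∫⁻ z, ftilde z
        ∂((∑ i ∈ Icc 1 k, π i)⁻¹ •
          ∑ i ∈ Icc 1 k, π i • ((1 - α i) • D i + α i • O i)))
      < ε * ⨆ k' ∈ Icc 1 T,
          ∑ t ∈ Icc 1 k', (∑ i ∈ Icc t T, π i) / ∑ i ∈ Icc 1 k', π i :=
  partially_observable_implies_fully_observable_thm33_general T D O hD hO π hπpos hπsum α A B hAmeas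
    hBmeas hDsupp hOsupp k hk ε go gc ftilde hgo hgc hboundA hboundB hsmall
end

section
/- Corollary 3.4 (replay data as OOD gives an order-free bound, quantitative form): Fix 1 ≤ k ≤ T and ε > 0. Let g_1^o, …, g_T^o, g_1^c, …, g_T^c and f̃ be measurable functions Z → [0,∞] such that for every 1 ≤ i ≤ k: f̃(z) ≤ Σ_{1 ≤ t ≤ k, t ≠ i} g_t^o(z) + g_i^c(z) for all z ∈ A_i, and f̃(z) ≤ Σ_{t=1}^{i} g_t^o(z) for all z ∈ B_i. For 1 ≤ t ≤ k define F̄_t : Z → [0,∞] by F̄_t(z) = g_t^c(z) if z ∈ A_t; F̄_t(z) = g_t^o(z) if z ∈ A_i for some 1 ≤ i ≤ k with i ≠ t, or z ∈ B_i for some t ≤ i ≤ k; and F̄_t(z) = 0 otherwise. Then ∫ f̃ dD_{[1:k]}^{α} ≤ (π_{[1:T]}/π_{[1:k]}) · Σ_{t=1}^{k} ∫ F̄_t dD̄, where D̄ = (1/π_{[1:T]}) Σ_{i=1}^{T} π_i·((1−α_i)·D_i + α_i·O_i). Consequently, if ∫ F̄_t dD̄ < ε for every 1 ≤ t ≤ k,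 then ∫ f̃ dD_{[1:k]}^{α} < ε · k · π_{[1:T]}/π_{[1:k]}. -/
open MeasureTheory Finset
open scoped ENNReal

/-!
On the support `A_i` of a task distribution with `i ≤ k` the hypothesis bounds `f̃` by
`∑_{t ≠ i} g_t^o + g_i^c`, and there each summand is at most the corresponding `F̄_t`; on the
support `B_i` of an OOD distribution it bounds `f̃` by `∑_{t ≤ i} g_t^o`, and there
`g_t^o ≤ F̄_t` for `t ≤ i`. Hence `f̃ ≤ ∑_{t ≤ k} F̄_t` almost everywhere for the mixture of the
first `k` tasks. Integrating, and enlarging that mixture to the one over all `T` tasks, gives the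
bound; the strict form follows by summing `k` terms each below `ε`.
-/

section

variable {Z : Type*}

/-- The function `F̄_t` of the corollary. -/
noncomputable def orderFreeTerm (A B : ℕ → Set Z) (go gc : ℕ → Z → ℝ≥0∞) (k t : ℕ) (z : Z) :
    ℝ≥0∞ :=
  (A t).indicator (gc t) z + (⋃ i ∈ Set.Icc 1 k \ {t}, A i).indicator (go t) z +
    (⋃ i ∈ Set.Icc t k, B i).indicator (go t) z

variable {A B : ℕ → Set Z} {go gc : ℕ → Z → ℝ≥0∞} {k t i : ℕ} {z : Z}

lemma gc_le_orderFreeTerm (hz : z ∈ A t) : gc t z ≤ orderFreeTerm A B go gc k t z := by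
  rw [← Set.indicator_of_mem hz (gc t)]
  exact le_self_add.trans le_self_add

lemma go_le_orderFreeTerm_of_mem_A (hi : i ∈ Set.Icc 1 k) (hit : i ≠ t) (hz : z ∈ A i) :
    go t z ≤ orderFreeTerm A B go gc k t z := by
  have hmem : z ∈ ⋃ j ∈ Set.Icc 1 k \ {t}, A j := Set.mem_biUnion ⟨hi, hit⟩ hz
  rw [← Set.indicator_of_mem hmem (go t)]
  exact le_add_self.trans le_self_add

lemma go_le_orderFreeTerm_of_mem_B (hi : i ∈ Set.Icc t k) (hz : z ∈ B i) :
    go t z ≤ orderFreeTerm A B go gc k t z := by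
  rw [← Set.indicator_of_mem (Set.mem_biUnion hi hz : z ∈ ⋃ j ∈ Set.Icc t k, B j) (go t)]
  exact le_add_self

lemma sum_erase_go_add_gc_le_sum_orderFreeTerm (hi : i ∈ Icc 1 k) (hz : z ∈ A i) :
    ∑ t ∈ (Icc 1 k).erase i, go t z + gc i z ≤ ∑ t ∈ Icc 1 k, orderFreeTerm A B go gc k t z := by
  rw [← sum_erase_add _ _ hi]
  gcongr with t ht
  · exact go_le_orderFreeTerm_of_mem_A (by simpa using hi) (ne_of_mem_erase ht).symm hz
  · exact gc_le_orderFreeTerm hz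

lemma sum_go_le_sum_orderFreeTerm (hik : i ≤ k) (hz : z ∈ B i) :
    ∑ t ∈ Icc 1 i, go t z ≤ ∑ t ∈ Icc 1 k, orderFreeTerm A B go gc k t z :=
  calc ∑ t ∈ Icc 1 i, go t z
      ≤ ∑ t ∈ Icc 1 i, orderFreeTerm A B go gc k t z :=
        sum_le_sum fun _ ht => go_le_orderFreeTerm_of_mem_B ⟨(mem_Icc.mp ht).2, hik⟩ hz
    _ ≤ ∑ t ∈ Icc 1 k, orderFreeTerm A B go gc k t z :=
        sum_le_sum_of_subset (Icc_subset_Icc le_rfl hik)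

variable [MeasurableSpace Z]

lemma measurable_orderFreeTerm (hA : ∀ i ∈ Icc 1 k, MeasurableSet (A i))
    (hB : ∀ i ∈ Icc 1 k, MeasurableSet (B i)) (hgo : Measurable (go t)) (hgc : Measurable (gc t))
    (ht : t ∈ Icc 1 k) : Measurable (orderFreeTerm A B go gc k t) := by
  have ht' := mem_Icc.mp ht
  have hAu : MeasurableSet (⋃ i ∈ Set.Icc 1 k \ {t}, A i) :=
    MeasurableSet.biUnion (Set.to_countable _) fun i hi => hA i (by simpa using hi.1)
  have hBu : MeasurableSet (⋃ i ∈ Set.Icc t k, B i) :=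
    MeasurableSet.biUnion (Set.to_countable _) fun i hi =>
      hB i (mem_Icc.mpr ⟨ht'.1.trans hi.1, hi.2⟩)
  exact ((hgc.indicator (hA t ht)).add (hgo.indicator hAu)).add (hgo.indicator hBu)

lemma ae_mem_union_of_smul_add_smul {D O : Measure Z} [IsProbabilityMeasure D]
    [IsProbabilityMeasure O] {A B : Set Z} (hA : MeasurableSet A) (hB : MeasurableSet B)
    (hDA : D A = 1) (hOB : O B = 1) (a b : ℝ≥0∞) : ∀ᵐ z ∂(a • D + b • O), z ∈ A ∪ B := by
  have hDA' : ∀ᵐ z ∂D, z ∈ A := (mem_ae_iff_prob_eq_one hA).mpr hDA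
  have hOB' : ∀ᵐ z ∂O, z ∈ B := (mem_ae_iff_prob_eq_one hB).mpr hOB
  rw [ae_add_measure_iff]
  exact ⟨Measure.ae_smul_measure (hDA'.mono fun _ => Or.inl) a,
    Measure.ae_smul_measure (hOB'.mono fun _ => Or.inr) b⟩

lemma ae_le_sum_orderFreeTerm {D O : ℕ → Measure Z}
    (hD : ∀ i ∈ Icc 1 k, IsProbabilityMeasure (D i))
    (hO : ∀ i ∈ Icc 1 k, IsProbabilityMeasure (O i)) (π α : ℕ → ℝ≥0∞)
    (hA : ∀ i ∈ Icc 1 k, MeasurableSet (A i)) (hB : ∀ i ∈ Icc 1 k, MeasurableSet (B i))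
    (hDA : ∀ i ∈ Icc 1 k, D i (A i) = 1) (hOB : ∀ i ∈ Icc 1 k, O i (B i) = 1) {f : Z → ℝ≥0∞}
    (hfA : ∀ i ∈ Icc 1 k, ∀ z ∈ A i, f z ≤ ∑ t ∈ (Icc 1 k).erase i, go t z + gc i z)
    (hfB : ∀ i ∈ Icc 1 k, ∀ z ∈ B i, f z ≤ ∑ t ∈ Icc 1 i, go t z) :
    ∀ᵐ z ∂(∑ i ∈ Icc 1 k, π i • ((1 - α i) • D i + α i • O i)),
      f z ≤ ∑ t ∈ Icc 1 k, orderFreeTerm A B go gc k t z := by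
  rw [ae_finsetSum_measure_iff]
  intro i hi
  have := hD i hi
  have := hO i hi
  filter_upwards [Measure.ae_smul_measure
    (ae_mem_union_of_smul_add_smul (hA i hi) (hB i hi) (hDA i hi) (hOB i hi) _ _) (π i)]
    with z hz
  rcases hz with hzA | hzB
  · exact (hfA i hi z hzA).trans (sum_erase_go_add_gc_le_sum_orderFreeTerm hi hzA)
  · exact (hfB i hi z hzB).trans (sum_go_le_sum_orderFreeTerm (mem_Icc.mp hi).2 hzB)

lemma lintegral_le_sum_lintegral_of_ae_le {ι : Type*} {μ ν : Measure Z} (hμν : μ ≤ ν)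
    {s : Finset ι} {f : Z → ℝ≥0∞} {F : ι → Z → ℝ≥0∞} (hF : ∀ t ∈ s, Measurable (F t))
    (hf : ∀ᵐ z ∂μ, f z ≤ ∑ t ∈ s, F t z) : ∫⁻ z, f z ∂μ ≤ ∑ t ∈ s, ∫⁻ z, F t z ∂ν :=
  calc ∫⁻ z, f z ∂μ ≤ ∫⁻ z, ∑ t ∈ s, F t z ∂μ := lintegral_mono_ae hf
    _ = ∑ t ∈ s, ∫⁻ z, F t z ∂μ := lintegral_finsetSum s hF
    _ ≤ ∑ t ∈ s, ∫⁻ z, F t z ∂ν := sum_le_sum fun _ _ => lintegral_mono' hμν le_rfl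

lemma ENNReal.lt_mul_card_mul_of_le_mul_sum {ι : Type*} {x c ε : ℝ≥0∞} {s : Finset ι}
    {a : ι → ℝ≥0∞} (hc0 : c ≠ 0) (hc : c ≠ ∞) (hs : s.Nonempty) (ha : ∀ t ∈ s, a t < ε)
    (hx : x ≤ c * ∑ t ∈ s, a t) : x < ε * #s * c :=
  calc x ≤ c * ∑ t ∈ s, a t := hx
    _ < c * ∑ _t ∈ s, ε := (ENNReal.mul_lt_mul_iff_right hc0 hc).mpr
        (ENNReal.sum_lt_sum_of_nonempty hs ha)
    _ = ε * #s * c := by rw [sum_const, nsmul_eq_mul, mul_comm c, mul_comm ε]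

end

theorem replay_order_free_bound_cor34_general
    {Z : Type*} [MeasurableSpace Z]
    (T : ℕ)
    (D O : ℕ → Measure Z)
    (hD : ∀ i ∈ Icc 1 T, IsProbabilityMeasure (D i))
    (hO : ∀ i ∈ Icc 1 T, IsProbabilityMeasure (O i))
    (π : ℕ → ENNReal) (hπpos : ∀ i ∈ Icc 1 T, 0 < π i)
    (hπsum : ∑ i ∈ Icc 1 T, π i = 1)
    (α : ℕ → ENNReal)
    (A B : ℕ → Set Z)
    (hAmeas : ∀ i ∈ Icc 1 T, MeasurableSet (A i))
    (hBmeas : ∀ i ∈ Icc 1 T, MeasurableSet (B i))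
    (hDsupp : ∀ i ∈ Icc 1 T, D i (A i) = 1)
    (hOsupp : ∀ i ∈ Icc 1 T, O i (B i) = 1)
    (k : ℕ) (hk : k ∈ Icc 1 T)
    (ε : ENNReal)
    (go gc : ℕ → Z → ENNReal) (ftilde : Z → ENNReal)
    (hgo : ∀ t, Measurable (go t)) (hgc : ∀ t, Measurable (gc t))
    (hboundA : ∀ i ∈ Icc 1 k, ∀ z ∈ A i,
      ftilde z ≤ ∑ t ∈ (Icc 1 k).erase i, go t z + gc i z)
    (hboundB : ∀ i ∈ Icc 1 k, ∀ z ∈ B i,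
      ftilde z ≤ ∑ t ∈ Icc 1 i, go t z) :
    ((∫⁻ z, ftilde z
        ∂((∑ i ∈ Icc 1 k, π i)⁻¹ •
          ∑ i ∈ Icc 1 k, π i • ((1 - α i) • D i + α i • O i)))
      ≤ ((∑ i ∈ Icc 1 T, π i) / ∑ i ∈ Icc 1 k, π i) *
          ∑ t ∈ Icc 1 k,
            ∫⁻ z,
              ((A t).indicator (gc t) z +
                (⋃ i ∈ Set.Icc 1 k \ {t}, A i).indicator (go t) z +
                (⋃ i ∈ Set.Icc t k, B i).indicator (go t) z)
              ∂((∑ i ∈ Icc 1 T, π i)⁻¹ •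
                ∑ i ∈ Icc 1 T, π i • ((1 - α i) • D i + α i • O i))) ∧
    ((∀ t ∈ Icc 1 k,
        (∫⁻ z,
            ((A t).indicator (gc t) z +
              (⋃ i ∈ Set.Icc 1 k \ {t}, A i).indicator (go t) z +
              (⋃ i ∈ Set.Icc t k, B i).indicator (go t) z)
            ∂((∑ i ∈ Icc 1 T, π i)⁻¹ •
              ∑ i ∈ Icc 1 T, π i • ((1 - α i) • D i + α i • O i))) < ε) →
      (∫⁻ z, ftilde z
          ∂((∑ i ∈ Icc 1 k, π i)⁻¹ •
            ∑ i ∈ Icc 1 k, π i • ((1 - α i) • D i + α i • O i)))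
        < ε * k * ((∑ i ∈ Icc 1 T, π i) / ∑ i ∈ Icc 1 k, π i)) := by
  obtain ⟨hk1, hkT⟩ := mem_Icc.mp hk
  have hsub : Icc 1 k ⊆ Icc 1 T := Icc_subset_Icc le_rfl hkT
  have hf := ae_le_sum_orderFreeTerm (fun i hi => hD i (hsub hi)) (fun i hi => hO i (hsub hi))
    π α (fun i hi => hAmeas i (hsub hi)) (fun i hi => hBmeas i (hsub hi))
    (fun i hi => hDsupp i (hsub hi)) (fun i hi => hOsupp i (hsub hi)) hboundA hboundB
  have hintegral := lintegral_le_sum_lintegral_of_ae_le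
    (sum_le_sum_of_subset_of_nonneg hsub fun _ _ _ => Measure.zero_le _)
    (fun t ht => measurable_orderFreeTerm (fun i hi => hAmeas i (hsub hi))
      (fun i hi => hBmeas i (hsub hi)) (hgo t) (hgc t) ht) hf
  have h1 : 1 ∈ Icc 1 k := mem_Icc.mpr ⟨le_rfl, hk1⟩
  have hπk0 : ∑ i ∈ Icc 1 k, π i ≠ 0 := fun h =>
    (hπpos 1 (hsub h1)).ne' (sum_eq_zero_iff.mp h 1 h1)
  have hπktop : ∑ i ∈ Icc 1 k, π i ≠ ∞ :=
    ne_top_of_le_ne_top ENNReal.one_ne_top (hπsum ▸ sum_le_sum_of_subset hsub)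
  rw [hπsum, inv_one, one_smul, one_div, lintegral_smul_measure]
  refine ⟨mul_le_mul_right hintegral _, fun h => ?_⟩
  simpa using ENNReal.lt_mul_card_mul_of_le_mul_sum (ENNReal.inv_ne_zero.mpr hπktop)
    (ENNReal.inv_ne_top.mpr hπk0) ⟨1, h1⟩ h (mul_le_mul_right hintegral _)

/-- Corollary 3.4 (replay data as OOD gives an order-free bound, quantitative
form): with `F̄_t = g_t^c` on `A_t`, `F̄_t = g_t^o` on `A_i (1 ≤ i ≤ k, i ≠ t)`
and on `B_i (t ≤ i ≤ k)`, and `F̄_t = 0` elsewhere,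
`∫ f̃ dD_{[1:k]}^{α} ≤ (π_{[1:T]}/π_{[1:k]}) · ∑_{t=1}^{k} ∫ F̄_t dD̄`; and if
`∫ F̄_t dD̄ < ε` for every `1 ≤ t ≤ k` then
`∫ f̃ dD_{[1:k]}^{α} < ε · k · π_{[1:T]}/π_{[1:k]}`. -/
theorem replay_order_free_bound_cor34
    {Z : Type*} [MeasurableSpace Z]
    (T : ℕ) (hT : 1 ≤ T)
    (D O : ℕ → Measure Z)
    (hD : ∀ i ∈ Icc 1 T, IsProbabilityMeasure (D i))
    (hO : ∀ i ∈ Icc 1 T, IsProbabilityMeasure (O i))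
    (π : ℕ → ENNReal) (hπpos : ∀ i ∈ Icc 1 T, 0 < π i)
    (hπsum : ∑ i ∈ Icc 1 T, π i = 1)
    (α : ℕ → ENNReal) (hα : ∀ i ∈ Icc 1 T, α i < 1)
    (A B : ℕ → Set Z)
    (hAmeas : ∀ i ∈ Icc 1 T, MeasurableSet (A i))
    (hBmeas : ∀ i ∈ Icc 1 T, MeasurableSet (B i))
    (hdisj : ∀ i ∈ Icc 1 T, ∀ j ∈ Icc 1 T,
      (i ≠ j → Disjoint (A i) (A j)) ∧ (i ≠ j → Disjoint (B i) (B j)) ∧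
        Disjoint (A i) (B j))
    (hDsupp : ∀ i ∈ Icc 1 T, D i (A i) = 1)
    (hOsupp : ∀ i ∈ Icc 1 T, O i (B i) = 1)
    (k : ℕ) (hk : k ∈ Icc 1 T)
    (ε : ENNReal) (hε : 0 < ε)
    (go gc : ℕ → Z → ENNReal) (ftilde : Z → ENNReal)
    (hgo : ∀ t, Measurable (go t)) (hgc : ∀ t, Measurable (gc t))
    (hftilde : Measurable ftilde)
    (hboundA : ∀ i ∈ Icc 1 k, ∀ z ∈ A i,
      ftilde z ≤ ∑ t ∈ (Icc 1 k).erase i, go t z + gc i z)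
    (hboundB : ∀ i ∈ Icc 1 k, ∀ z ∈ B i,
      ftilde z ≤ ∑ t ∈ Icc 1 i, go t z) :
    ((∫⁻ z, ftilde z
        ∂((∑ i ∈ Icc 1 k, π i)⁻¹ •
          ∑ i ∈ Icc 1 k, π i • ((1 - α i) • D i + α i • O i)))
      ≤ ((∑ i ∈ Icc 1 T, π i) / ∑ i ∈ Icc 1 k, π i) *
          ∑ t ∈ Icc 1 k,
            ∫⁻ z,
              ((A t).indicator (gc t) z +
                (⋃ i ∈ Set.Icc 1 k \ {t}, A i).indicator (go t) z +
                (⋃ i ∈ Set.Icc t k, B i).indicator (go t) z)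
              ∂((∑ i ∈ Icc 1 T, π i)⁻¹ •
                ∑ i ∈ Icc 1 T, π i • ((1 - α i) • D i + α i • O i))) ∧
    ((∀ t ∈ Icc 1 k,
        (∫⁻ z,
            ((A t).indicator (gc t) z +
              (⋃ i ∈ Set.Icc 1 k \ {t}, A i).indicator (go t) z +
              (⋃ i ∈ Set.Icc t k, B i).indicator (go t) z)
            ∂((∑ i ∈ Icc 1 T, π i)⁻¹ •
              ∑ i ∈ Icc 1 T, π i • ((1 - α i) • D i + α i • O i))) < ε) →
      (∫⁻ z, ftilde z
          ∂((∑ i ∈ Icc 1 k, π i)⁻¹ •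
            ∑ i ∈ Icc 1 k, π i • ((1 - α i) • D i + α i • O i)))
        < ε * k * ((∑ i ∈ Icc 1 T, π i) / ∑ i ∈ Icc 1 k, π i)) :=
  replay_order_free_bound_cor34_general T D O hD hO π hπpos hπsum α A B hAmeas hBmeas hDsupp hOsupp
    k hk ε go gc ftilde hgo hgc hboundA hboundB
end
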